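/- arXiv:1508.05656 — 2 statements merged into one kernel-verified Lean document; each statement's English description precedes it below -/
import Mathlib

section
/- Let M be an m²×n² real matrix such that R_{m×n}(M) is symmetric and has rank one. Then there exists an m×n real matrix A such that M = A ⊗ A if and only if the trace of R_{m×n}(M) is strictly positive. -/
open Matrix Kronecker

/-- `vec A` is the vector of entries of the matrix `A`, indexed by pairs. -/
def vec {F : Type*} [Field F] {α β : Type*} (A : Matrix α β F) : α × β → F :=
  fun p => A p.1 p.2

/-- The rearrangement operator `R_{m×n}`:
`R M ((i,j),(k,l)) = M ((i,k),(j,l))`. -/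
def R {F : Type*} [Field F] {m n : ℕ}
    (M : Matrix (Fin m × Fin m) (Fin n × Fin n) F) :
    Matrix (Fin m × Fin n) (Fin m × Fin n) F :=
  fun p q => M (p.1, q.1) (p.2, q.2)

/-- The `j`-th rearrangement operator `R^{(j)}_{m×n}` on `m^k × n^k` matrices
(here with `k` replaced by `k+1` so that `k ≥ 1` automatically): the entry at
row `(a,b)` and column `(r,c)` is the entry of `M` at the tuples obtained from
`r` and `c` by inserting `a` resp. `b` at position `j`. -/
def Rj {F : Type*} [Field F] {m n k : ℕ} (j : Fin (k + 1))
    (M : Matrix (Fin (k + 1) → Fin m) (Fin (k + 1) → Fin n) F) :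
    Matrix (Fin m × Fin n) ((Fin k → Fin m) × (Fin k → Fin n)) F :=
  fun p q => M (j.insertNth p.1 q.1) (j.insertNth p.2 q.2)

/-- `R^Σ_{m×n} = Σ_j R^{(j)}_{m×n}`. -/
def RSigma {F : Type*} [Field F] {m n k : ℕ}
    (M : Matrix (Fin (k + 1) → Fin m) (Fin (k + 1) → Fin n) F) :
    Matrix (Fin m × Fin n) ((Fin k → Fin m) × (Fin k → Fin n)) F :=
  ∑ j : Fin (k + 1), Rj j M

/-- The `k`-th Kronecker power of an `m×n` matrix, indexed by tuples. -/
def kpow {F : Type*} [Field F] {m n : ℕ} (A : Matrix (Fin m) (Fin n) F) (k : ℕ) :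
    Matrix (Fin k → Fin m) (Fin k → Fin n) F :=
  fun r c => ∏ i, A (r i) (c i)

/-- The `k`-fold Kronecker product of a family of `m×n` matrices,
indexed by tuples. -/
def kprodFam {F : Type*} [Field F] {m n k : ℕ}
    (A : Fin k → Matrix (Fin m) (Fin n) F) :
    Matrix (Fin k → Fin m) (Fin k → Fin n) F :=
  fun r c => ∏ i, A i (r i) (c i)

/-!
Since `R (A ⊗ₖ B) = vec A (vec B)ᵀ` and `R` is injective, `M` is a Kronecker square `A ⊗ₖ A`
exactly when `R M = v vᵀ` for a real vector `v`. A rank-one matrix factors as `u wᵀ`, and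
symmetry forces `w = c u` with `c = (w ⬝ u) / (u ⬝ u)`; the trace `c (u ⬝ u)` is then positive
exactly when `c > 0`, which is what allows taking `v = √c u`. Conversely `tr (v vᵀ) = v ⬝ v > 0`,
as `v ≠ 0` by the rank hypothesis.
-/

theorem R_injective {F : Type*} [Field F] {m n : ℕ} :
    Function.Injective (@R F _ m n) :=
  fun _ _ h => Matrix.ext fun p q => congrFun₂ h (p.1, q.1) (p.2, q.2)

theorem R_kronecker {F : Type*} [Field F] {m n : ℕ} (A B : Matrix (Fin m) (Fin n) F) :
    R (A ⊗ₖ B) = vecMulVec (_root_.vec A) (_root_.vec B) :=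
  rfl

theorem Matrix.exists_eq_vecMulVec_of_rank_eq_one {K m n : Type*} [Field K] [Fintype n]
    {S : Matrix m n K} (h : S.rank = 1) : ∃ u w, S = vecMulVec u w := by
  obtain ⟨u, -, hspan⟩ := finrank_eq_one_iff'.mp h
  have hcol : ∀ j, (fun i => S i j) ∈ LinearMap.range S.mulVecLin := by
    classical
    exact fun j => ⟨Pi.single j 1, by ext i; simp [mulVec_single]⟩
  choose w hw using fun j => hspan ⟨_, hcol j⟩
  refine ⟨u.1, w, Matrix.ext fun i j => ?_⟩
  simpa [vecMulVec, mul_comm] using (congrFun (congrArg Subtype.val (hw j)) i).symm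

theorem Matrix.trace_vecMulVec_self_pos {ι R : Type*} [Fintype ι] [Ring R] [LinearOrder R]
    [IsStrictOrderedRing R] {v : ι → R} (hv : v ≠ 0) : 0 < (vecMulVec v v).trace := by
  rw [trace_vecMulVec]
  exact lt_of_le_of_ne (Finset.sum_nonneg fun i _ => mul_self_nonneg (v i))
    (Ne.symm (mt dotProduct_self_eq_zero.mp hv))

theorem Matrix.exists_eq_vecMulVec_self_of_isSymm {ι : Type*} [Fintype ι]
    {S : Matrix ι ι ℝ} (hS : S.IsSymm) (hrank : S.rank = 1) (htr : 0 < S.trace) :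
    ∃ v, S = vecMulVec v v := by
  obtain ⟨u, w, rfl⟩ := exists_eq_vecMulVec_of_rank_eq_one hrank
  rw [trace_vecMulVec] at htr
  have hu : 0 < u ⬝ᵥ u := by
    have hu0 : u ≠ 0 := by
      rintro rfl
      simp at htr
    simpa using trace_vecMulVec_self_pos hu0
  -- Applying `vecMulVec w u = vecMulVec u w` to `u` shows that `w` is a multiple of `u`.
  have hw : (u ⬝ᵥ u) • w = (w ⬝ᵥ u) • u := by
    simpa [vecMulVec_mulVec] using congrArg (· *ᵥ u) hS.eq
  obtain ⟨c, hc, rfl⟩ : ∃ c : ℝ, 0 < c ∧ w = c • u :=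
    ⟨(w ⬝ᵥ u) / (u ⬝ᵥ u), div_pos (by rwa [dotProduct_comm]) hu,
      by rw [div_eq_inv_mul, ← smul_smul, ← hw, inv_smul_smul₀ hu.ne']⟩
  refine ⟨√c • u, ?_⟩
  rw [smul_vecMulVec, vecMulVec_smul, vecMulVec_smul, smul_smul, Real.mul_self_sqrt hc.le]

/-- A real matrix `M` with `R_{m×n}(M)` symmetric of rank one
has a real Kronecker square root iff `tr(R_{m×n}(M)) > 0`. -/
theorem stmt_4 {m n : ℕ}
    (M : Matrix (Fin m × Fin m) (Fin n × Fin n) ℝ)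
    (hsymm : (R M).IsSymm) (hrank : (R M).rank = 1) :
    (∃ A : Matrix (Fin m) (Fin n) ℝ, M = A ⊗ₖ A) ↔ 0 < (R M).trace := by
  constructor
  · rintro ⟨A, rfl⟩
    rw [R_kronecker] at hrank ⊢
    refine trace_vecMulVec_self_pos fun hA => ?_
    simp [hA] at hrank
  · intro htr
    obtain ⟨v, hv⟩ := exists_eq_vecMulVec_self_of_isSymm hsymm hrank htr
    exact ⟨of fun i j => v (i, j), R_injective hv⟩
end

section
/- Let F be a field, k ≥ 1 and let A be an m×n matrix over F. Then R^Σ_{m×n}(⊗^k A) = k · vec(A) · vec(⊗^{k-1} A)ᵀ. -/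
open Matrix Kronecker

theorem kpow_insertNth_insertNth {F : Type*} [Field F] {m n k : ℕ}
    (A : Matrix (Fin m) (Fin n) F) (j : Fin (k + 1)) (a : Fin m) (b : Fin n)
    (r : Fin k → Fin m) (c : Fin k → Fin n) :
    kpow A (k + 1) (j.insertNth a r) (j.insertNth b c) = A a b * kpow A k r c := by
  simp only [kpow, Fin.prod_univ_succAbove _ j, Fin.insertNth_apply_same,
    Fin.insertNth_apply_succAbove]

theorem Rj_kpow {F : Type*} [Field F] {m n k : ℕ}
    (A : Matrix (Fin m) (Fin n) F) (j : Fin (k + 1)) :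
    Rj j (kpow A (k + 1)) = vecMulVec (_root_.vec A) (_root_.vec (kpow A k)) := by
  ext ⟨a, b⟩ ⟨r, c⟩
  exact kpow_insertNth_insertNth A j a b r c

/-- `R^Σ(⊗^k A) = k ⬝ vec(A) vec(⊗^{k-1} A)ᵀ`
(here the order `k ≥ 1` of the paper is represented as `k + 1`). -/
theorem stmt_9 {F : Type*} [Field F] {m n k : ℕ}
    (A : Matrix (Fin m) (Fin n) F) :
    RSigma (kpow A (k + 1)) =
      ((k + 1 : ℕ) : F) • vecMulVec (_root_.vec A) (_root_.vec (kpow A k)) := by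
  simp only [RSigma, Rj_kpow, Finset.sum_const, Finset.card_univ, Fintype.card_fin,
    Nat.cast_smul_eq_nsmul]
end
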